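/- arXiv:math/0611261 — 3 statements merged into one kernel-verified Lean document; each statement's English description precedes it below -/
import Mathlib

section
/- For the density g_a as above, the integral of g_a^2 over (-1/2,1/2) is strictly greater than a/8 for every a > 4. -/
/-! The inner plateau `(-1/a, 1/a)`, where `g_a = a/4`, already contributes exactly
`(a/4)² · (2/a) = a/8`. The integrand is nonnegative, and on the outer plateau `(2/a, 1/2)`,
which has positive length once `a > 4`, it equals `(a/(4(a-3)))² > 0`. -/

open MeasureTheory

/-- The piecewise design density `g_a`: even, equal to `a/4` on `(0,1/a)`,
linear on `(1/a,2/a)`, equal to `a/(4(a-3))` on `(2/a,1/2)`, and `0` beyond `1/2`. -/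
noncomputable def gdens (a x : ℝ) : ℝ :=
  if |x| < 1 / a then a / 4
  else if |x| < 2 / a then a / 4 + (|x| - 1 / a) * a * (a / (4 * (a - 3)) - a / 4)
  else if |x| ≤ 1 / 2 then a / (4 * (a - 3))
  else 0

open Set

lemma setIntegral_add_le_of_disjoint {α : Type*} [MeasurableSpace α] {μ : Measure α}
    {f : α → ℝ} {s t u : Set α} (hf : IntegrableOn f s μ) (hf0 : 0 ≤ᵐ[μ.restrict s] f)
    (htu : Disjoint t u) (hu : MeasurableSet u) (ht : t ⊆ s) (hus : u ⊆ s) :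
    ∫ x in t, f x ∂μ + ∫ x in u, f x ∂μ ≤ ∫ x in s, f x ∂μ := by
  rw [← setIntegral_union htu hu (hf.mono_set ht) (hf.mono_set hus)]
  exact setIntegral_mono_set hf hf0 (union_subset ht hus).eventuallyLE

section

variable {a : ℝ}

lemma gdens_of_abs_lt {x : ℝ} (hx : |x| < 1 / a) : gdens a x = a / 4 := if_pos hx

lemma gdens_of_mem_Ioo (ha : 0 < a) {x : ℝ} (hx : x ∈ Ioo (2 / a) (1 / 2)) :
    gdens a x = a / (4 * (a - 3)) := by
  have hx0 : 0 < x := (div_pos two_pos ha).trans hx.1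
  have h12 : 1 / a < 2 / a := div_lt_div_of_pos_right one_lt_two ha
  rw [gdens, abs_of_pos hx0, if_neg (by linarith [hx.1]), if_neg hx.1.le.not_gt, if_pos hx.2.le]

lemma measurable_gdens (a : ℝ) : Measurable (gdens a) := by
  unfold gdens
  refine Measurable.ite (measurableSet_lt (by fun_prop) measurable_const) measurable_const ?_
  refine Measurable.ite (measurableSet_lt (by fun_prop) measurable_const) (by fun_prop) ?_
  exact Measurable.ite (measurableSet_le (by fun_prop) measurable_const) measurable_const
    measurable_const

lemma gdens_mem_Icc (ha : 4 ≤ a) (x : ℝ) : gdens a x ∈ Icc 0 (a / 4) := by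
  have ha0 : 0 < a := by linarith
  have hc0 : 0 < a / (4 * (a - 3)) := div_pos ha0 (by linarith)
  have hca : a / (4 * (a - 3)) ≤ a / 4 := div_le_div_of_nonneg_left ha0.le four_pos (by linarith)
  unfold gdens
  split_ifs with h1 h2 h3
  · exact ⟨by positivity, le_rfl⟩
  · -- the linear piece is the convex combination `(1 - t) (a/4) + t (a/(4(a-3)))`, `t ∈ [0, 1)`
    set t := (|x| - 1 / a) * a
    have ht0 : 0 ≤ t := mul_nonneg (by linarith [not_lt.mp h1]) ha0.le
    have ht1 : t < 1 := by
      have : t < 1 / a * a :=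
        mul_lt_mul_of_pos_right (by linarith [show 2 / a = 1 / a + 1 / a by ring]) ha0
      rwa [one_div_mul_cancel ha0.ne'] at this
    constructor <;> nlinarith
  · exact ⟨hc0.le, hca⟩
  · exact ⟨le_rfl, by positivity⟩

lemma integrableOn_gdens_sq (ha : 4 ≤ a) {s : Set ℝ} (hs : volume s ≠ ⊤) :
    IntegrableOn (fun x => gdens a x ^ 2) s := by
  refine Measure.integrableOn_of_bounded (M := (a / 4) ^ 2) hs
    ((measurable_gdens a).pow_const 2).aestronglyMeasurable
    (Filter.Eventually.of_forall fun x => ?_)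
  obtain ⟨h0, h1⟩ := gdens_mem_Icc ha x
  rw [Real.norm_eq_abs, abs_of_nonneg (by positivity)]
  exact pow_le_pow_left₀ h0 h1 2

lemma setIntegral_gdens_sq_inner (ha : 0 < a) :
    ∫ x in Ioo (-(1 / a)) (1 / a), gdens a x ^ 2 = a / 8 := by
  rw [setIntegral_congr_fun measurableSet_Ioo (g := fun _ => (a / 4) ^ 2)
      fun x hx => by rw [gdens_of_abs_lt (abs_lt.mpr hx)],
    setIntegral_const, Real.volume_real_Ioo_of_le (by linarith [one_div_pos.mpr ha]),
    smul_eq_mul]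
  field_simp
  ring

lemma setIntegral_gdens_sq_outer (ha : 4 ≤ a) :
    ∫ x in Ioo (2 / a) (1 / 2), gdens a x ^ 2 = (1 / 2 - 2 / a) * (a / (4 * (a - 3))) ^ 2 := by
  rw [setIntegral_congr_fun measurableSet_Ioo (g := fun _ => (a / (4 * (a - 3))) ^ 2)
      fun x hx => by rw [gdens_of_mem_Ioo (by linarith) hx],
    setIntegral_const,
    Real.volume_real_Ioo_of_le (by rw [div_le_div_iff₀ (by linarith) two_pos]; linarith),
    smul_eq_mul]

end

theorem gdens_sq_integral_gt :
    ∀ a : ℝ, 4 < a → a / 8 < ∫ x in Set.Ioo (-(1/2) : ℝ) (1/2), (gdens a x) ^ 2 := by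
  intro a ha
  have ha0 : 0 < a := by linarith
  have h2 : 0 < 2 / a := div_pos two_pos ha0
  have h12 : 1 / a < 2 / a := div_lt_div_of_pos_right one_lt_two ha0
  have h2lt : 2 / a < 1 / 2 := by rw [div_lt_div_iff₀ ha0 two_pos]; linarith
  have houter_pos : 0 < (1 / 2 - 2 / a) * (a / (4 * (a - 3))) ^ 2 :=
    mul_pos (by linarith) (pow_pos (div_pos ha0 (by linarith)) 2)
  have hdisj : Disjoint (Ioo (-(1 / a)) (1 / a)) (Ioo (2 / a) (1 / 2)) :=
    Ioo_disjoint_Ioo.mpr ((min_le_left _ _).trans (h12.le.trans (le_max_right _ _)))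
  calc a / 8 < a / 8 + (1 / 2 - 2 / a) * (a / (4 * (a - 3))) ^ 2 :=
        lt_add_of_pos_right _ houter_pos
    _ = (∫ x in Ioo (-(1 / a)) (1 / a), gdens a x ^ 2) +
          ∫ x in Ioo (2 / a) (1 / 2), gdens a x ^ 2 := by
      rw [setIntegral_gdens_sq_inner ha0, setIntegral_gdens_sq_outer ha.le]
    _ ≤ _ := setIntegral_add_le_of_disjoint (integrableOn_gdens_sq ha.le (by simp))
      (Filter.Eventually.of_forall fun x => sq_nonneg _) hdisj measurableSet_Ioo
      (Ioo_subset_Ioo (by linarith) (by linarith)) (Ioo_subset_Ioo (by linarith) le_rfl)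
end

section
/- If a_n → 0⁺ and R_0 is a bounded convex open subset of ℝ^d with nonempty interior, then the number of cubes of the lattice a_n·ℤ^d that intersect both R_0 and its complement is O(a_n^{-(d-1)}) as n → ∞. -/
/-!
Fix a closed ball `closedBall c ρ ⊆ R₀` and put `ε = a / ρ`. A lattice cube of side `a` has
sup-diameter at most `a = ε ρ`, so by convexity a cube meeting `R₀` lies in the homothetic copy
`homothety c (1 + ε) '' R₀`, while a cube meeting the complement misses `homothety c (1 - ε) '' R₀`.
The boundary cubes are disjoint, hence their number times `a ^ d` is at most the volume of the
shell, `((1 + ε) ^ d - (1 - ε) ^ d) vol R₀ = O(ε)`; dividing by `a ^ d` gives `O(a ^ (1 - d))`.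
-/

open Filter Function MeasureTheory Set AffineMap Module

section Homothety

variable {E : Type*} [NormedAddCommGroup E] [NormedSpace ℝ E] {s : Set E} {c x y : E} {ρ ε : ℝ}

theorem add_inv_smul_sub_mem_of_closedBall_subset (hball : Metric.closedBall c ρ ⊆ s)
    (hε : 0 < ε) (hxy : dist y x ≤ ε * ρ) : c + ε⁻¹ • (y - x) ∈ s := by
  apply hball
  rw [Metric.mem_closedBall, dist_eq_norm, add_sub_cancel_left, norm_smul, norm_inv,
    Real.norm_of_nonneg hε.le, ← dist_eq_norm, inv_mul_le_iff₀ hε]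
  exact hxy

theorem Convex.mem_image_homothety_one_add (hs : Convex ℝ s)
    (hball : Metric.closedBall c ρ ⊆ s) (hε : 0 < ε) (hx : x ∈ s) (hxy : dist y x ≤ ε * ρ) :
    y ∈ homothety c (1 + ε) '' s := by
  refine ⟨(1 + ε)⁻¹ • x + (ε / (1 + ε)) • (c + ε⁻¹ • (y - x)),
    hs hx (add_inv_smul_sub_mem_of_closedBall_subset hball hε hxy) (by positivity)
      (by positivity) (by field_simp), ?_⟩
  rw [homothety_apply, vsub_eq_sub, vadd_eq_add]
  match_scalars <;> field_simp <;> ring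

theorem Convex.mem_of_mem_image_homothety_one_sub (hs : Convex ℝ s)
    (hball : Metric.closedBall c ρ ⊆ s) (hε : 0 < ε) (hε₁ : ε ≤ 1)
    (hx : x ∈ homothety c (1 - ε) '' s) (hxy : dist y x ≤ ε * ρ) : y ∈ s := by
  obtain ⟨w, hw, rfl⟩ := hx
  have hy : y = (1 - ε) • w + ε • (c + ε⁻¹ • (y - homothety c (1 - ε) w)) := by
    rw [homothety_apply, vsub_eq_sub, vadd_eq_add]
    match_scalars <;> field_simp <;> ring
  rw [hy]
  exact hs hw (add_inv_smul_sub_mem_of_closedBall_subset hball hε hxy) (by linarith) hε.le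
    (by ring)

theorem Convex.image_homothety_subset_image_homothety (hs : Convex ℝ s) (hc : c ∈ s) {t t' : ℝ}
    (ht : 0 ≤ t) (htt' : t ≤ t') : homothety c t '' s ⊆ homothety c t' '' s := by
  rcases ht.eq_or_lt with rfl | ht
  · rintro _ ⟨w, -, rfl⟩
    exact ⟨c, hc, by simp⟩
  rintro _ ⟨w, hw, rfl⟩
  refine ⟨homothety c (t / t') w, ?_, ?_⟩
  · rw [homothety_eq_lineMap]
    exact hs.lineMap_mem hc hw
      ⟨div_nonneg ht.le (ht.trans_le htt').le, div_le_one_of_le₀ htt' (by linarith)⟩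
  · rw [← homothety_mul_apply, mul_div_cancel₀ _ (by linarith)]

end Homothety

section Measure

variable {E : Type*} [NormedAddCommGroup E] [NormedSpace ℝ E] [FiniteDimensional ℝ E]
  [MeasurableSpace E] [BorelSpace E] (μ : Measure E) [μ.IsAddHaarMeasure] {s U : Set E} {c : E}
  {ε : ℝ}

theorem measureReal_image_homothety {t : ℝ} (ht : 0 ≤ t) (s : Set E) :
    μ.real (homothety c t '' s) = t ^ finrank ℝ E * μ.real s := by
  simp [measureReal_def, ENNReal.toReal_mul, abs_of_nonneg, ht]

theorem Convex.measureReal_le_of_subset_image_homothety_diff (hs : Convex ℝ s) (hc : c ∈ s)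
    (hμs : μ s ≠ ⊤) (hε₀ : 0 ≤ ε) (hε₁ : ε ≤ 1) (hU : MeasurableSet U)
    (hU_sub : U ⊆ homothety c (1 + ε) '' s) (hU_disj : Disjoint (homothety c (1 - ε) '' s) U) :
    μ.real U ≤ ((1 + ε) ^ finrank ℝ E - (1 - ε) ^ finrank ℝ E) * μ.real s := by
  have hfin : ∀ t, μ (homothety c t '' s) ≠ ⊤ := fun t : ℝ => by
    rw [Measure.addHaar_image_homothety]
    exact ENNReal.mul_ne_top ENNReal.ofReal_ne_top hμs
  have h : μ.real (homothety c (1 - ε) '' s ∪ U) ≤ μ.real (homothety c (1 + ε) '' s) :=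
    measureReal_mono (union_subset
      (hs.image_homothety_subset_image_homothety hc (by linarith) (by linarith)) hU_sub)
      (hfin _)
  rw [measureReal_union hU_disj hU (hfin _) (measure_ne_top_of_subset hU_sub (hfin _)),
    measureReal_image_homothety μ (by linarith), measureReal_image_homothety μ (by linarith)] at h
  linarith

end Measure

theorem one_add_pow_sub_one_sub_pow_le {ε : ℝ} (hε₀ : 0 ≤ ε) (hε₁ : ε ≤ 1) (n : ℕ) :
    (1 + ε) ^ n - (1 - ε) ^ n ≤ 2 * n * 2 ^ (n - 1) * ε := by
  have hmax : max |1 + ε| |1 - ε| ≤ 2 :=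
    max_le (by rw [abs_le]; constructor <;> linarith) (by rw [abs_le]; constructor <;> linarith)
  calc (1 + ε) ^ n - (1 - ε) ^ n ≤ |(1 + ε) ^ n - (1 - ε) ^ n| := le_abs_self _
    _ ≤ |(1 + ε) - (1 - ε)| * n * max |1 + ε| |1 - ε| ^ (n - 1) := abs_pow_sub_pow_le _ _ _
    _ ≤ |(1 + ε) - (1 - ε)| * n * 2 ^ (n - 1) := by gcongr
    _ = 2 * n * 2 ^ (n - 1) * ε := by
      rw [show (1 + ε) - (1 - ε) = 2 * ε by ring, abs_of_nonneg (by positivity)]; ring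

section LatticeCube

variable {ι : Type*} {a : ℝ} {k : ι → ℤ} {x y : ι → ℝ}

def latticeCube (a : ℝ) (k : ι → ℤ) : Set (ι → ℝ) :=
  univ.pi fun i => Ico (a * k i) (a * (k i + 1))

def boundaryCubes (a : ℝ) (s : Set (ι → ℝ)) : Set (ι → ℤ) :=
  {k | (latticeCube a k ∩ s).Nonempty ∧ (latticeCube a k \ s).Nonempty}

theorem mem_latticeCube : x ∈ latticeCube a k ↔ ∀ i, a * k i ≤ x i ∧ x i < a * (k i + 1) := by
  simp [latticeCube]

theorem floor_div_eq_of_mem_latticeCube (ha : 0 < a) (hx : x ∈ latticeCube a k) (i : ι) :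
    ⌊x i / a⌋ = k i := by
  obtain ⟨h₁, h₂⟩ := mem_latticeCube.1 hx i
  rw [Int.floor_eq_iff, le_div_iff₀ ha, div_lt_iff₀ ha]
  constructor <;> linarith

theorem pairwise_disjoint_latticeCube (ha : 0 < a) :
    Pairwise (Disjoint on (latticeCube a : (ι → ℤ) → Set (ι → ℝ))) :=
  fun k k' hkk' => disjoint_left.2 fun x hx hx' => hkk' <| funext fun i => by
    rw [← floor_div_eq_of_mem_latticeCube ha hx, ← floor_div_eq_of_mem_latticeCube ha hx']

variable [Fintype ι]

theorem measurableSet_latticeCube (a : ℝ) (k : ι → ℤ) : MeasurableSet (latticeCube a k) :=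
  .univ_pi fun _ => measurableSet_Ico

theorem volume_latticeCube (ha : 0 ≤ a) (k : ι → ℤ) :
    volume (latticeCube a k) = ENNReal.ofReal (a ^ Fintype.card ι) := by
  simp [latticeCube, Real.volume_pi_Ico, mul_add, ENNReal.ofReal_pow ha]

theorem measureReal_latticeCube (ha : 0 ≤ a) (k : ι → ℤ) :
    volume.real (latticeCube a k) = a ^ Fintype.card ι := by
  simp [measureReal_def, volume_latticeCube ha, ha]

theorem dist_le_of_mem_latticeCube (ha : 0 ≤ a) (hx : x ∈ latticeCube a k)
    (hy : y ∈ latticeCube a k) : dist x y ≤ a := by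
  refine (dist_pi_le_iff ha).2 fun i => ?_
  obtain ⟨hx₁, hx₂⟩ := mem_latticeCube.1 hx i
  obtain ⟨hy₁, hy₂⟩ := mem_latticeCube.1 hy i
  rw [Real.dist_eq, abs_le]
  constructor <;> linarith

end LatticeCube

theorem Convex.ncard_boundaryCubes_mul_le {ι : Type*} [Fintype ι] {s : Set (ι → ℝ)}
    (hs : Convex ℝ s) (hμs : volume s ≠ ⊤) {c : ι → ℝ} {ρ a : ℝ}
    (hball : Metric.closedBall c ρ ⊆ s) (ha : 0 < a) (haρ : a ≤ ρ) :
    (boundaryCubes a s).ncard * a ^ Fintype.card ι ≤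
      2 * Fintype.card ι * 2 ^ (Fintype.card ι - 1) * volume.real s / ρ * a := by
  have hρ : 0 < ρ := ha.trans_le haρ
  rcases (boundaryCubes a s).finite_or_infinite with hfin | hinf
  swap
  · rw [hinf.ncard, Nat.cast_zero, zero_mul]
    positivity
  set ε := a / ρ
  have hε : 0 < ε := div_pos ha hρ
  have hε₁ : ε ≤ 1 := div_le_one_of_le₀ haρ hρ.le
  have hερ : a = ε * ρ := (div_mul_cancel₀ a hρ.ne').symm
  have hc : c ∈ s := hball (Metric.mem_closedBall_self hρ.le)
  set F := hfin.toFinset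
  have hU : volume.real (⋃ k ∈ F, latticeCube a k) = F.card * a ^ Fintype.card ι := by
    rw [measureReal_biUnion_finset ((pairwise_disjoint_latticeCube ha).set_pairwise _)
      (fun k _ => measurableSet_latticeCube a k)
      (fun k _ => volume_latticeCube ha.le k ▸ ENNReal.ofReal_ne_top)]
    simp [measureReal_latticeCube ha.le]
  have hU_sub : (⋃ k ∈ F, latticeCube a k) ⊆ homothety c (1 + ε) '' s := by
    simp only [iUnion_subset_iff, F, Finite.mem_toFinset]
    rintro k ⟨⟨x, hxk, hxs⟩, -⟩ y hyk
    exact hs.mem_image_homothety_one_add hball hε hxs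
      (hερ ▸ dist_le_of_mem_latticeCube ha.le hyk hxk)
  have hU_disj : Disjoint (homothety c (1 - ε) '' s) (⋃ k ∈ F, latticeCube a k) := by
    simp only [disjoint_iUnion_right, F, Finite.mem_toFinset]
    rintro k ⟨-, y, hyk, hys⟩
    refine disjoint_left.2 fun z hz hzk => hys ?_
    exact hs.mem_of_mem_image_homothety_one_sub hball hε hε₁ hz
      (hερ ▸ dist_le_of_mem_latticeCube ha.le hyk hzk)
  have hcount := hs.measureReal_le_of_subset_image_homothety_diff volume hc hμs hε.le hε₁
    (F.measurableSet_biUnion fun k _ => measurableSet_latticeCube a k) hU_sub hU_disj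
  rw [hU, finrank_fintype_fun_eq_card] at hcount
  rw [ncard_eq_toFinset_card _ hfin]
  calc (F.card : ℝ) * a ^ Fintype.card ι
      ≤ ((1 + ε) ^ Fintype.card ι - (1 - ε) ^ Fintype.card ι) * volume.real s := hcount
    _ ≤ 2 * Fintype.card ι * 2 ^ (Fintype.card ι - 1) * ε * volume.real s := by
      gcongr
      exact one_add_pow_sub_one_sub_pow_le hε.le hε₁ _
    _ = 2 * Fintype.card ι * 2 ^ (Fintype.card ι - 1) * volume.real s / ρ * a := by
      simp only [ε]; ring

/-- If `a n → 0⁺` and `R₀ ⊆ ℝ^d` is a bounded convex open nonempty set, then the number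
of cubes of the lattice `a n • ℤ^d` meeting both `R₀` and its complement is
`O(a n ^ (-(d-1)))` as `n → ∞`. -/
theorem boundary_cube_count_bigO (d : ℕ) (hd : 1 ≤ d) (R₀ : Set (Fin d → ℝ))
    (hBdd : Bornology.IsBounded R₀) (hConv : Convex ℝ R₀) (hOpen : IsOpen R₀)
    (hNe : R₀.Nonempty) (a : ℕ → ℝ) (ha : ∀ n, 0 < a n)
    (ha0 : Tendsto a atTop (nhds 0)) :
    ∃ C > 0, ∀ᶠ n in atTop,
      ((Set.ncard {k : Fin d → ℤ |
          (∃ x : Fin d → ℝ, (∀ i, a n * (k i) ≤ x i ∧ x i < a n * (k i + 1)) ∧ x ∈ R₀) ∧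
          (∃ x : Fin d → ℝ, (∀ i, a n * (k i) ≤ x i ∧ x i < a n * (k i + 1)) ∧ x ∉ R₀)} : ℝ))
        ≤ C * (a n)⁻¹ ^ (d - 1) := by
  obtain ⟨c, hc⟩ := hNe
  obtain ⟨ρ, hρ, hball⟩ := Metric.nhds_basis_closedBall.mem_iff.1 (hOpen.mem_nhds hc)
  have hV : 0 < volume.real R₀ :=
    ENNReal.toReal_pos (hOpen.measure_pos volume ⟨c, hc⟩).ne' hBdd.measure_lt_top.ne
  refine ⟨2 * d * 2 ^ (d - 1) * volume.real R₀ / ρ, by positivity, ?_⟩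
  filter_upwards [ha0.eventually_le_const hρ] with n hn
  have hcount := hConv.ncard_boundaryCubes_mul_le hBdd.measure_lt_top.ne hball (ha n) hn
  rw [Fintype.card_fin] at hcount
  have hset : {k : Fin d → ℤ |
      (∃ x : Fin d → ℝ, (∀ i, a n * (k i) ≤ x i ∧ x i < a n * (k i + 1)) ∧ x ∈ R₀) ∧
      (∃ x : Fin d → ℝ, (∀ i, a n * (k i) ≤ x i ∧ x i < a n * (k i + 1)) ∧ x ∉ R₀)} =
      boundaryCubes (a n) R₀ := by
    simp [boundaryCubes, Set.Nonempty, mem_latticeCube]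
  rw [hset, inv_pow, ← div_eq_mul_inv, le_div_iff₀ (pow_pos (ha n) _)]
  have hpow : a n ^ d = a n ^ (d - 1) * a n := by rw [← pow_succ, Nat.sub_add_cancel hd]
  rw [hpow, ← mul_assoc] at hcount
  exact le_of_mul_le_mul_right hcount (ha n)
end

section
/- Let f be a bounded continuous probability density on ℝ^d with compact support, σ: ℝ^d → ℝ integrable and continuous, and λ_n → ∞. Then λ_n^d · ∬ σ(λ_n(x−y)) f(x) f(y) dx dy → (∫ σ(s) ds)·(∫ f(x)² dx) as n → ∞. -/
open MeasureTheory Filter Module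

/-!
Substituting `s = c • (x - y)` turns `c ^ d ∬ σ (c • (x - y)) f x f y` into
`∬ σ s f x f (x - c⁻¹ • s)`. As a function of `t = c⁻¹` this is continuous by dominated
convergence, with dominating function `C |f x| |σ s|` for a bound `C` of `f`, and at `t = 0`
it factors as `(∫ σ) (∫ f ^ 2)`.
-/

section RescaledCovariance

variable {E : Type*} [NormedAddCommGroup E] [NormedSpace ℝ E]

def covarianceIntegrand (σ f : E → ℝ) (t : ℝ) (p : E × E) : ℝ :=
  σ p.2 * f p.1 * f (p.1 - t • p.2)

theorem norm_covarianceIntegrand_le {σ f : E → ℝ} {C : ℝ} (hfC : ∀ x, ‖f x‖ ≤ C) (t : ℝ)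
    (p : E × E) : ‖covarianceIntegrand σ f t p‖ ≤ C * ‖f p.1‖ * ‖σ p.2‖ := by
  rw [covarianceIntegrand, norm_mul, norm_mul]
  have := mul_le_mul_of_nonneg_left (hfC (p.1 - t • p.2)) (by positivity : 0 ≤ ‖σ p.2‖ * ‖f p.1‖)
  linarith

variable [MeasurableSpace E]

theorem integral_covarianceIntegrand_zero (μ : Measure E) [SFinite μ] (σ f : E → ℝ) :
    ∫ p, covarianceIntegrand σ f 0 p ∂(μ.prod μ) = (∫ s, σ s ∂μ) * ∫ x, f x ^ 2 ∂μ := by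
  have hsplit : covarianceIntegrand σ f 0 = fun p => f p.1 ^ 2 * σ p.2 := by
    ext p
    simp only [covarianceIntegrand, zero_smul, sub_zero]
    ring
  rw [hsplit, integral_prod_mul (fun x => f x ^ 2) σ, mul_comm]

variable [FiniteDimensional ℝ E] [BorelSpace E]

section Dominated

variable {μ : Measure E} {σ f : E → ℝ} {C : ℝ}

theorem aestronglyMeasurable_covarianceIntegrand (hσ : AEStronglyMeasurable σ μ)
    (hf : Continuous f) (t : ℝ) :
    AEStronglyMeasurable (covarianceIntegrand σ f t) (μ.prod μ) :=
  (hσ.comp_snd.mul (hf.comp continuous_fst).aestronglyMeasurable).mul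
    (hf.comp (continuous_fst.sub (continuous_snd.const_smul t))).aestronglyMeasurable

theorem integrable_covarianceIntegrand (hσ : Integrable σ μ) (hf : Continuous f)
    (hfi : Integrable f μ) (hfC : ∀ x, ‖f x‖ ≤ C) (t : ℝ) :
    Integrable (covarianceIntegrand σ f t) (μ.prod μ) :=
  ((hfi.norm.const_mul C).mul_prod hσ.norm).mono'
    (aestronglyMeasurable_covarianceIntegrand hσ.aestronglyMeasurable hf t)
    (Eventually.of_forall (norm_covarianceIntegrand_le hfC t))

theorem continuous_integral_covarianceIntegrand (hσ : Integrable σ μ) (hf : Continuous f)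
    (hfi : Integrable f μ) (hfC : ∀ x, ‖f x‖ ≤ C) :
    Continuous fun t => ∫ p, covarianceIntegrand σ f t p ∂(μ.prod μ) :=
  continuous_of_dominated (aestronglyMeasurable_covarianceIntegrand hσ.aestronglyMeasurable hf)
    (fun t => Eventually.of_forall (norm_covarianceIntegrand_le hfC t))
    ((hfi.norm.const_mul C).mul_prod hσ.norm)
    (Eventually.of_forall fun _ => continuous_const.mul
      (hf.comp (continuous_const.sub (continuous_id.smul continuous_const))))

end Dominated

section Rescaling

variable (μ : Measure E) [μ.IsAddHaarMeasure]

theorem pow_finrank_mul_integral_comp_smul_sub (σ g : E → ℝ) {c : ℝ} (hc : 0 < c) (x : E) :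
    c ^ finrank ℝ E * ∫ y, σ (c • (x - y)) * g y ∂μ = ∫ s, σ s * g (x - c⁻¹ • s) ∂μ := by
  have hsub : ∫ y, σ (c • (x - y)) * g y ∂μ = ∫ y, σ (c • y) * g (x - y) ∂μ := by
    simpa only [sub_sub_cancel] using
      integral_sub_left_eq_self (fun y => σ (c • y) * g (x - y)) μ x
  have hscale := Measure.integral_comp_smul_of_nonneg μ (fun s => σ s * g (x - c⁻¹ • s)) c
    (hR := hc.le)
  simp only [smul_smul, inv_mul_cancel₀ hc.ne', one_smul, smul_eq_mul] at hscale
  rw [hsub, hscale, ← mul_assoc, mul_inv_cancel₀ (pow_pos hc _).ne', one_mul]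

theorem pow_finrank_mul_integral_integral_eq (σ f : E → ℝ) {c : ℝ} (hc : 0 < c)
    (hint : Integrable (covarianceIntegrand σ f c⁻¹) (μ.prod μ)) :
    c ^ finrank ℝ E * ∫ x, ∫ y, σ (c • (x - y)) * f x * f y ∂μ ∂μ
      = ∫ p, covarianceIntegrand σ f c⁻¹ p ∂(μ.prod μ) := by
  rw [integral_prod _ hint, ← integral_const_mul]
  refine integral_congr_ae (Eventually.of_forall fun x => ?_)
  simp only [covarianceIntegrand, mul_right_comm _ (f x), integral_mul_const, ← mul_assoc,
    pow_finrank_mul_integral_comp_smul_sub μ σ f hc x]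

end Rescaling

end RescaledCovariance

theorem double_integral_covariance_limit_general (d : ℕ) (σ f : (Fin d → ℝ) → ℝ)
    (hσ : Integrable σ)
    (hf : Continuous f) (hfc : HasCompactSupport f)
    (lam : ℕ → ℝ) (hlamtop : Tendsto lam atTop atTop) :
    Tendsto (fun n =>
      (lam n) ^ d * ∫ x : Fin d → ℝ, ∫ y : Fin d → ℝ, σ (lam n • (x - y)) * f x * f y)
      atTop (nhds ((∫ s, σ s) * ∫ x, (f x) ^ 2)) := by
  obtain ⟨C, hfC⟩ := hf.bounded_above_of_compact_support hfc
  have hfi : Integrable f := hf.integrable_of_hasCompactSupport hfc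
  have hlim := ((continuous_integral_covarianceIntegrand hσ hf hfi hfC).tendsto 0).comp
    (tendsto_inv_atTop_zero.comp hlamtop)
  rw [← integral_covarianceIntegrand_zero]
  refine hlim.congr' ?_
  filter_upwards [hlamtop.eventually_gt_atTop 0] with n hn
  have hrescale := pow_finrank_mul_integral_integral_eq volume σ f hn
    (integrable_covarianceIntegrand hσ hf hfi hfC _)
  rw [finrank_fin_fun] at hrescale
  exact hrescale.symm

/-- Change of variables + dominated convergence:
`λ_n^d ∬ σ(λ_n(x−y)) f(x) f(y) dx dy → (∫σ)·(∫f²)`. -/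
theorem double_integral_covariance_limit (d : ℕ) (σ f : (Fin d → ℝ) → ℝ)
    (hσ : Integrable σ) (hσc : Continuous σ)
    (hf : Continuous f) (hfc : HasCompactSupport f)
    (hf0 : ∀ x, 0 ≤ f x) (hf1 : ∫ x, f x = 1)
    (lam : ℕ → ℝ) (hlam : ∀ n, 0 < lam n) (hlamtop : Tendsto lam atTop atTop) :
    Tendsto (fun n =>
      (lam n) ^ d * ∫ x : Fin d → ℝ, ∫ y : Fin d → ℝ, σ (lam n • (x - y)) * f x * f y)
      atTop (nhds ((∫ s, σ s) * ∫ x, (f x) ^ 2)) :=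
  double_integral_covariance_limit_general d σ f hσ hf hfc lam hlamtop
end
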